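/- Derivatives of iterated Lie derivatives at steady states (equation (9) in the proof of Proposition 5). Let w : ℝ^m → ℝ^n be continuously differentiable with f(w(u),u) = 0 for all u ∈ ℝ^m. Fix u* ∈ ℝ^m and set x* := w(u*), A := (∂f/∂x)(x*,u*) and W := (∂w/∂u)(u*). Then for every i ∈ {0, 1, …, r}: (∂(L_f^i h)/∂x)(x*,u*) = (∇h(x*))^T ∘ A^i (as a linear functional on ℝ^n), and for every i ∈ {1, …, r}: (∂(L_f^i h)/∂u)(x*,u*) = −(∇h(x*))^T ∘ A^i ∘ W (as a linear functional on ℝ^m); equivalently, ((∂(L_f^r h)/∂u)(x*,u*))^T = −W^T·A^r·∇h(x*). -/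

import Mathlib

/-!
At a steady state `p`, where `f p = 0`, the recursion `L_f^{i+1} h (p) = D(L_f^i h)(p) (f p, 0)`
differentiates to `D(L_f^{i+1} h)(p) = ∂ₓ(L_f^i h)(p) ∘ Df(p)`, because the second-derivative term
is applied to `f p = 0`. Restricted to `x` this gives `∂ₓ L_f^{i+1} h = ∂ₓ L_f^i h ∘ A`, hence
`∂ₓ L_f^i h = ∇hᵀ Aⁱ`; restricted to `u`, together with `∂ᵤ f = -A W` (differentiate
`f (w u, u) = 0`), it gives `∂ᵤ L_f^{i+1} h = -∇hᵀ A^{i+1} W`.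
-/

open ContinuousLinearMap

/-- Iterated Lie derivatives `L_f^i h`. -/
noncomputable def lieD {n m : ℕ}
    (f : EuclideanSpace ℝ (Fin n) × EuclideanSpace ℝ (Fin m) → EuclideanSpace ℝ (Fin n))
    (h : EuclideanSpace ℝ (Fin n) → ℝ) :
    ℕ → EuclideanSpace ℝ (Fin n) × EuclideanSpace ℝ (Fin m) → ℝ
  | 0 => fun p => h p.1
  | i + 1 => fun p => fderiv ℝ (fun x => lieD f h i (x, p.2)) p.1 (f p)

section Calculus

variable {E F G : Type*} [NormedAddCommGroup E] [NormedSpace ℝ E]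
  [NormedAddCommGroup F] [NormedSpace ℝ F] [NormedAddCommGroup G] [NormedSpace ℝ G]

theorem fderiv_partial_fst {g : E × F → G} {a : E} {c : F} (hg : DifferentiableAt ℝ g (a, c)) :
    fderiv ℝ (fun x => g (x, c)) a = (fderiv ℝ g (a, c)).comp (inl ℝ E F) :=
  (hg.hasFDerivAt.comp a (hasFDerivAt_prodMk_left a c)).fderiv

theorem fderiv_partial_snd {g : E × F → G} {a : E} {c : F} (hg : DifferentiableAt ℝ g (a, c)) :
    fderiv ℝ (fun u => g (a, u)) c = (fderiv ℝ g (a, c)).comp (inr ℝ E F) :=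
  (hg.hasFDerivAt.comp c (hasFDerivAt_prodMk_right a c)).fderiv

theorem HasFDerivAt.clm_apply_of_eq_zero {c : E → F →L[ℝ] G} {c' : E →L[ℝ] F →L[ℝ] G}
    {u : E → F} {u' : E →L[ℝ] F} {x : E} (hc : HasFDerivAt c c' x) (hu : HasFDerivAt u u' x)
    (hux : u x = 0) : HasFDerivAt (fun y => c y (u y)) ((c x).comp u') x := by
  simpa [hux] using hc.clm_apply hu

theorem fderiv_comp_inr_eq_neg_of_graph_eq_zero {g : E × F → G} {w : F → E} {c : F}
    (hg : DifferentiableAt ℝ g (w c, c)) (hw : DifferentiableAt ℝ w c)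
    (hzero : ∀ u, g (w u, u) = 0) :
    (fderiv ℝ g (w c, c)).comp (inr ℝ E F)
      = -((fderiv ℝ (fun x => g (x, c)) (w c)).comp (fderiv ℝ w c)) := by
  have hcomp : HasFDerivAt (fun u => g (w u, u))
      ((fderiv ℝ g (w c, c)).comp ((fderiv ℝ w c).prod (ContinuousLinearMap.id ℝ F))) c :=
    hg.hasFDerivAt.comp (f := fun u => (w u, u)) c (hw.hasFDerivAt.prodMk (hasFDerivAt_id c))
  have hgraph : (fderiv ℝ g (w c, c)).comp ((fderiv ℝ w c).prod (ContinuousLinearMap.id ℝ F))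
      = 0 := by
    rw [← hcomp.fderiv, funext hzero, fderiv_const_apply]
  ext v
  have hv := congr($hgraph v)
  rw [fderiv_partial_fst hg]
  simp only [comp_apply, prod_apply, coe_id', id_eq, zero_apply] at hv
  simp only [comp_apply, inr_apply, inl_apply, neg_apply]
  rw [eq_neg_iff_add_eq_zero, add_comm, ← map_add, Prod.mk_add_mk, add_zero, zero_add, hv]

end Calculus

theorem gradient_eq_adjoint_apply_gradient {E F : Type*} [NormedAddCommGroup E]
    [InnerProductSpace ℝ E] [CompleteSpace E] [NormedAddCommGroup F] [InnerProductSpace ℝ F]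
    [CompleteSpace F] {g : F → ℝ} {φ : E → ℝ} {x : F} {y : E} (T : F →L[ℝ] E)
    (hg : fderiv ℝ g x = (fderiv ℝ φ y).comp T) :
    gradient g x = adjoint T (gradient φ y) := by
  apply (InnerProductSpace.toDual ℝ F).injective
  ext v
  rw [toDual_gradient, hg, InnerProductSpace.toDual_apply_apply, adjoint_inner_left,
    inner_gradient_left, comp_apply]

section LieDerivative

variable {n m : ℕ}
  {f : EuclideanSpace ℝ (Fin n) × EuclideanSpace ℝ (Fin m) → EuclideanSpace ℝ (Fin n)}
  {h : EuclideanSpace ℝ (Fin n) → ℝ}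

theorem lieD_succ {i : ℕ} (hd : Differentiable ℝ (lieD f h i)) :
    lieD f h (i + 1) = fun p => fderiv ℝ (lieD f h i) p (inl ℝ _ _ (f p)) := by
  funext p
  exact congr($(fderiv_partial_fst (hd p)) (f p))

theorem contDiff_lieD {k i : ℕ} (hf : ContDiff ℝ (k + i : ℕ) f)
    (hh : ContDiff ℝ (k + i + 1 : ℕ) h) : ContDiff ℝ (k + 1 : ℕ) (lieD f h i) := by
  induction i generalizing k with
  | zero => exact hh.comp contDiff_fst
  | succ i ih =>
    have hL : ContDiff ℝ (k + 1 + 1 : ℕ) (lieD f h i) :=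
      ih (by rwa [Nat.add_right_comm]) (by rwa [Nat.add_right_comm k 1])
    have hv : ContDiff ℝ (k + 1 : ℕ) fun p => inl ℝ _ (EuclideanSpace ℝ (Fin m)) (f p) :=
      (hf.of_le (by norm_cast; omega)).continuousLinearMap_comp _
    rw [lieD_succ (hL.differentiable (by simp))]
    exact (hL.fderiv_right (by push_cast; rfl)).clm_apply hv

variable {p : EuclideanSpace ℝ (Fin n) × EuclideanSpace ℝ (Fin m)}

theorem fderiv_lieD_succ_of_eq_zero {i : ℕ} (hL : ContDiff ℝ 2 (lieD f h i))
    (hf : DifferentiableAt ℝ f p) (hp : f p = 0) :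
    fderiv ℝ (lieD f h (i + 1)) p
      = ((fderiv ℝ (lieD f h i) p).comp (inl ℝ _ _)).comp (fderiv ℝ f p) := by
  rw [lieD_succ (hL.differentiable two_ne_zero), comp_assoc]
  exact ((hL.fderiv_right le_rfl).differentiable one_ne_zero p).hasFDerivAt.clm_apply_of_eq_zero
    ((inl ℝ _ (EuclideanSpace ℝ (Fin m))).hasFDerivAt.comp p hf.hasFDerivAt) (by simp [hp])
    |>.fderiv

theorem fderiv_lieD_comp_inl_of_eq_zero {r : ℕ} (hL : ∀ i ≤ r, ContDiff ℝ 2 (lieD f h i))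
    (hf : DifferentiableAt ℝ f p) (hp : f p = 0) :
    ∀ i ≤ r, (fderiv ℝ (lieD f h i) p).comp (inl ℝ _ _)
      = (fderiv ℝ h p.1).comp (((fderiv ℝ f p).comp (inl ℝ _ _)) ^ i)
  | 0, hi => by
    rw [pow_zero, ← fderiv_partial_fst ((hL 0 hi).differentiable two_ne_zero p)]
    rfl
  | i + 1, hi => by
    rw [fderiv_lieD_succ_of_eq_zero (hL i (by omega)) hf hp, comp_assoc,
      fderiv_lieD_comp_inl_of_eq_zero hL hf hp i (by omega), pow_succ, mul_def, comp_assoc]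

end LieDerivative

theorem lie_derivatives_at_steady_state_general
    {n m r : ℕ} (hr : 0 < r)
    (f : EuclideanSpace ℝ (Fin n) × EuclideanSpace ℝ (Fin m) → EuclideanSpace ℝ (Fin n))
    (h : EuclideanSpace ℝ (Fin n) → ℝ)
    (hf : ContDiff ℝ (r + 1 : ℕ) f) (hh : ContDiff ℝ (r + 2 : ℕ) h)
    (w : EuclideanSpace ℝ (Fin m) → EuclideanSpace ℝ (Fin n)) (hw : ContDiff ℝ 1 w)
    (hsteady : ∀ u, f (w u, u) = 0)
    (us : EuclideanSpace ℝ (Fin m)) :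
    (∀ i ≤ r,
      fderiv ℝ (fun x => lieD f h i (x, us)) (w us)
        = (fderiv ℝ h (w us)).comp ((fderiv ℝ (fun x => f (x, us)) (w us)) ^ i)) ∧
    (∀ i, 1 ≤ i → i ≤ r →
      fderiv ℝ (fun u => lieD f h i (w us, u)) us
        = -((fderiv ℝ h (w us)).comp
            (((fderiv ℝ (fun x => f (x, us)) (w us)) ^ i).comp (fderiv ℝ w us)))) ∧
    gradient (fun u => lieD f h r (w us, u)) us
      = -(ContinuousLinearMap.adjoint (fderiv ℝ w us))
          ((ContinuousLinearMap.adjoint ((fderiv ℝ (fun x => f (x, us)) (w us)) ^ r))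
            (gradient h (w us))) := by
  have hL : ∀ i ≤ r, ContDiff ℝ 2 (lieD f h i) := fun i hi =>
    contDiff_lieD (k := 1) (hf.of_le (by norm_cast; omega)) (hh.of_le (by norm_cast; omega))
  have hfd : DifferentiableAt ℝ f (w us, us) := hf.differentiable (by simp) _
  have hwd : DifferentiableAt ℝ w us := hw.differentiable one_ne_zero us
  have hx : ∀ i ≤ r, fderiv ℝ (fun x => lieD f h i (x, us)) (w us)
      = (fderiv ℝ h (w us)).comp ((fderiv ℝ (fun x => f (x, us)) (w us)) ^ i) := fun i hi => by
    rw [fderiv_partial_fst ((hL i hi).differentiable two_ne_zero _), fderiv_partial_fst hfd]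
    exact fderiv_lieD_comp_inl_of_eq_zero hL hfd (hsteady us) i hi
  have hu : ∀ i, 1 ≤ i → i ≤ r → fderiv ℝ (fun u => lieD f h i (w us, u)) us
      = -((fderiv ℝ h (w us)).comp
          (((fderiv ℝ (fun x => f (x, us)) (w us)) ^ i).comp (fderiv ℝ w us))) := by
    rintro (_ | j) hj hjr
    · omega
    rw [fderiv_partial_snd ((hL _ hjr).differentiable two_ne_zero _),
      fderiv_lieD_succ_of_eq_zero (hL j (by omega)) hfd (hsteady us), comp_assoc,
      fderiv_comp_inr_eq_neg_of_graph_eq_zero hfd hwd hsteady,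
      ← fderiv_partial_fst ((hL j (by omega)).differentiable two_ne_zero _), hx j (by omega),
      comp_neg, pow_succ, mul_def, comp_assoc, comp_assoc]
  refine ⟨hx, hu, ?_⟩
  rw [gradient_eq_adjoint_apply_gradient _ ((hu r hr le_rfl).trans (comp_neg _ _).symm),
    map_neg, adjoint_comp, neg_apply, comp_apply]

/-- Derivatives of iterated Lie derivatives at steady states (equation (9) in the proof of
Proposition 5): with `A := (∂f/∂x)(x*,u*)` and `W := (∂w/∂u)(u*)`, one has
`(∂(L_f^i h)/∂x)(x*,u*) = (∇h(x*))ᵀ ∘ Aⁱ` for `i ≤ r` and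
`(∂(L_f^i h)/∂u)(x*,u*) = −(∇h(x*))ᵀ ∘ Aⁱ ∘ W` for `1 ≤ i ≤ r`; equivalently, in transposed
form, `((∂(L_f^r h)/∂u)(x*,u*))ᵀ = −Wᵀ (Aʳ)ᵀ ∇h(x*)`. -/
theorem lie_derivatives_at_steady_state
    {n m r : ℕ} (hn : 0 < n) (hm : 0 < m) (hr : 0 < r)
    (f : EuclideanSpace ℝ (Fin n) × EuclideanSpace ℝ (Fin m) → EuclideanSpace ℝ (Fin n))
    (h : EuclideanSpace ℝ (Fin n) → ℝ)
    (hf : ContDiff ℝ (r + 1 : ℕ) f) (hh : ContDiff ℝ (r + 2 : ℕ) h)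
    (w : EuclideanSpace ℝ (Fin m) → EuclideanSpace ℝ (Fin n)) (hw : ContDiff ℝ 1 w)
    (hsteady : ∀ u, f (w u, u) = 0)
    (us : EuclideanSpace ℝ (Fin m)) :
    (∀ i ≤ r,
      fderiv ℝ (fun x => lieD f h i (x, us)) (w us)
        = (fderiv ℝ h (w us)).comp ((fderiv ℝ (fun x => f (x, us)) (w us)) ^ i)) ∧
    (∀ i, 1 ≤ i → i ≤ r →
      fderiv ℝ (fun u => lieD f h i (w us, u)) us
        = -((fderiv ℝ h (w us)).comp
            (((fderiv ℝ (fun x => f (x, us)) (w us)) ^ i).comp (fderiv ℝ w us)))) ∧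
    gradient (fun u => lieD f h r (w us, u)) us
      = -(ContinuousLinearMap.adjoint (fderiv ℝ w us))
          ((ContinuousLinearMap.adjoint ((fderiv ℝ (fun x => f (x, us)) (w us)) ^ r))
            (gradient h (w us))) :=
  lie_derivatives_at_steady_state_general hr f h hf hh w hw hsteady us
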